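/- arXiv:2604.22717 — 5 statements merged into one kernel-verified Lean document; each statement's English description precedes it below -/
import Mathlib

section
/- Let Ĉ ⊆ ℝ² be a closed convex cone with Ĉ ∩ ℝ²₊ = {0}. If the Clausius temperature scale is essentially unique (i.e., all pairs (β₁,β₂) of positive reals with β·q ≤ 0 for all q ∈ Ĉ are positive multiples of one another), then Ĉ contains a nonzero reversible element: some q* ≠ 0 with both q* ∈ Ĉ and -q* ∈ Ĉ. -/
/-!
A positive functional `β` with `β ≤ 0` on `Ĉ` exists by separating `Ĉ` strictly from the compact
segment `[e₁, e₂]`, which lies in the quadrant but avoids `0`. If `Ĉ` contains no line, the face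
`Ĉ ∩ β⊥` is contained in one of the two open half-lines of `β⊥`, so on that face one of the
coordinates is negative, say `q₁ < 0`. A compactness argument on the unit sphere then shows that
`β + ε e₁` still supports `Ĉ` for small `ε > 0`: a second Clausius scale, not proportional to `β`.
-/

open Metric

theorem IsCompact.exists_pos_forall_le_neg {X : Type*} [TopologicalSpace X] {K : Set X}
    (hK : IsCompact K) {f : X → ℝ} (hf : ContinuousOn f K) (hneg : ∀ x ∈ K, f x < 0) :
    ∃ δ > 0, ∀ x ∈ K, f x ≤ -δ := by
  rcases K.eq_empty_or_nonempty with rfl | hne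
  · exact ⟨1, one_pos, by simp⟩
  obtain ⟨x₀, hx₀, hmax⟩ := hK.exists_isMaxOn hne hf
  exact ⟨-f x₀, neg_pos.2 (hneg x₀ hx₀), fun x hx => by simpa using hmax hx⟩

section Cone

variable {E : Type*} [NormedAddCommGroup E] [NormedSpace ℝ E] {C : Set E}

theorem forall_nonpos_of_forall_norm_eq_one (hcone : ∀ q ∈ C, ∀ α : ℝ, 0 < α → α • q ∈ C)
    {φ : StrongDual ℝ E} (h : ∀ q ∈ C, ‖q‖ = 1 → φ q ≤ 0) : ∀ q ∈ C, φ q ≤ 0 := by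
  intro q hq
  rcases eq_or_ne q 0 with rfl | hq0
  · simp
  have hnorm : 0 < ‖q‖ := norm_pos_iff.2 hq0
  have hunit := h _ (hcone q hq _ (inv_pos.2 hnorm)) (norm_smul_inv_norm hq0)
  rw [map_smul, smul_eq_mul] at hunit
  exact nonpos_of_mul_nonpos_right hunit (inv_pos.2 hnorm)

theorem exists_pos_forall_add_smul_nonpos [ProperSpace E] (hC : IsClosed C)
    (hcone : ∀ q ∈ C, ∀ α : ℝ, 0 < α → α • q ∈ C) {f g : StrongDual ℝ E}
    (hf : ∀ q ∈ C, f q ≤ 0) (hg : ∀ q ∈ C, q ≠ 0 → f q = 0 → g q < 0) :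
    ∃ ε > 0, ∀ q ∈ C, f q + ε * g q ≤ 0 := by
  set K := C ∩ sphere (0 : E) 1 ∩ {q | 0 ≤ g q}
  have hK : IsCompact K := ((isCompact_sphere 0 1).inter_left hC).inter_right
    (isClosed_le continuous_const g.continuous)
  have hfK : ∀ q ∈ K, f q < 0 := fun q ⟨⟨hqC, hq1⟩, hgq⟩ => (hf q hqC).lt_of_ne fun hfq =>
    (hg q hqC (ne_of_mem_sphere hq1 one_ne_zero) hfq).not_ge hgq
  obtain ⟨δ, hδ, hfδ⟩ := hK.exists_pos_forall_le_neg f.continuous.continuousOn hfK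
  set ε := δ / (‖g‖ + 1)
  have hε : 0 < ε := by positivity
  have hεg : ε * ‖g‖ ≤ δ := by
    rw [div_mul_eq_mul_div, div_le_iff₀ (by positivity)]
    linarith
  suffices key : ∀ q ∈ C, ‖q‖ = 1 → (f + ε • g) q ≤ 0 from
    ⟨ε, hε, by simpa using forall_nonpos_of_forall_norm_eq_one hcone key⟩
  intro q hqC hq1
  simp only [add_apply, smul_apply, smul_eq_mul]
  rcases le_or_gt 0 (g q) with hgq | hgq
  · have hgle : g q ≤ ‖g‖ := (Real.le_norm_self _).trans (by simpa using g.le_opNorm_of_le hq1.le)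
    have := hfδ q ⟨⟨hqC, by simpa using hq1⟩, hgq⟩
    linarith [mul_le_mul_of_nonneg_left hgle hε.le]
  · linarith [hf q hqC, mul_neg_of_pos_of_neg hε hgq]

end Cone

section Separation

variable {E : Type*} [AddCommGroup E] [Module ℝ E] [TopologicalSpace E] [IsTopologicalAddGroup E]
  [ContinuousSMul ℝ E] [LocallyConvexSpace ℝ E]

theorem exists_nonneg_on_cone_neg_on_compact {C K : Set E} (hC : IsClosed C) (hCconv : Convex ℝ C)
    (hcone : ∀ q ∈ C, ∀ α : ℝ, 0 < α → α • q ∈ C) (h0 : (0 : E) ∈ C) (hK : IsCompact K)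
    (hKconv : Convex ℝ K) (hdisj : Disjoint K C) :
    ∃ f : StrongDual ℝ E, (∀ q ∈ C, 0 ≤ f q) ∧ ∀ x ∈ K, f x < 0 := by
  obtain ⟨f, u, v, hfK, huv, hfC⟩ :=
    geometric_hahn_banach_compact_closed hKconv hK hCconv hC hdisj
  have hv : v < 0 := by simpa using hfC 0 h0
  refine ⟨f, fun q hq => ?_, fun x hx => (hfK x hx).trans (huv.trans hv)⟩
  by_contra! hfq
  have hscaled := hfC _ (hcone q hq (v / f q) (div_pos_of_neg_of_neg hv hfq))
  rw [map_smul, smul_eq_mul, div_mul_cancel₀ _ hfq.ne] at hscaled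
  exact hscaled.false

end Separation

def IsClausiusScale (C : Set (ℝ × ℝ)) (β : ℝ × ℝ) : Prop :=
  0 < β.1 ∧ 0 < β.2 ∧ ∀ q ∈ C, β.1 * q.1 + β.2 * q.2 ≤ 0

def pairing (β : ℝ × ℝ) : StrongDual ℝ (ℝ × ℝ) :=
  β.1 • ContinuousLinearMap.fst ℝ ℝ ℝ + β.2 • ContinuousLinearMap.snd ℝ ℝ ℝ

@[simp]
theorem pairing_apply (β q : ℝ × ℝ) : pairing β q = β.1 * q.1 + β.2 * q.2 := rfl

theorem StrongDual.apply_eq_fst_mul_add_snd_mul (f : StrongDual ℝ (ℝ × ℝ)) (q : ℝ × ℝ) :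
    f q = q.1 * f (1, 0) + q.2 * f (0, 1) := by
  conv_lhs => rw [show q = q.1 • ((1 : ℝ), (0 : ℝ)) + q.2 • ((0 : ℝ), (1 : ℝ)) by ext <;> simp]
  rw [map_add, map_smul, map_smul, smul_eq_mul, smul_eq_mul]

section TwoStates

variable {C : Set (ℝ × ℝ)}

theorem exists_isClausiusScale (hC : IsClosed C) (hCconv : Convex ℝ C)
    (hcone : ∀ q ∈ C, ∀ α : ℝ, 0 < α → α • q ∈ C)
    (hKP : C ∩ {x : ℝ × ℝ | 0 ≤ x.1 ∧ 0 ≤ x.2} = {0}) : ∃ β, IsClausiusScale C β := by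
  have h0 : (0 : ℝ × ℝ) ∈ C := (hKP.ge rfl).1
  have hdisj : Disjoint (segment ℝ ((1 : ℝ), (0 : ℝ)) (0, 1)) C := by
    rw [Set.disjoint_left]
    rintro _ ⟨a, b, ha, hb, hab, rfl⟩ hC
    have hzero : a • ((1 : ℝ), (0 : ℝ)) + b • ((0 : ℝ), (1 : ℝ)) = 0 :=
      hKP.le ⟨hC, by simp [ha, hb]⟩
    simp [Prod.ext_iff] at hzero
    linarith [hzero.1, hzero.2]
  have hseg : IsCompact (segment ℝ ((1 : ℝ), (0 : ℝ)) (0, 1)) :=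
    convexHull_pair (𝕜 := ℝ) ((1 : ℝ), (0 : ℝ)) (0, 1) ▸
      (Set.toFinite _).isCompact_convexHull (𝕜 := ℝ)
  obtain ⟨f, hfC, hfK⟩ := exists_nonneg_on_cone_neg_on_compact hC hCconv hcone h0 hseg
    (convex_segment _ _) hdisj
  refine ⟨(-f (1, 0), -f (0, 1)), neg_pos.2 (hfK _ (left_mem_segment _ _ _)),
    neg_pos.2 (hfK _ (right_mem_segment _ _ _)), fun q hq => ?_⟩
  have := hfC q hq
  rw [f.apply_eq_fst_mul_add_snd_mul] at this
  simp only
  linarith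

theorem fst_neg_or_snd_neg_on_face (hcone : ∀ q ∈ C, ∀ α : ℝ, 0 < α → α • q ∈ C)
    (hKP : C ∩ {x : ℝ × ℝ | 0 ≤ x.1 ∧ 0 ≤ x.2} ⊆ {0}) (hsalient : ∀ q ∈ C, -q ∈ C → q = 0)
    {β : ℝ × ℝ} (hβ1 : 0 < β.1) (hβ2 : 0 < β.2) :
    (∀ q ∈ C, q ≠ 0 → β.1 * q.1 + β.2 * q.2 = 0 → q.1 < 0) ∨
      (∀ q ∈ C, q ≠ 0 → β.1 * q.1 + β.2 * q.2 = 0 → q.2 < 0) := by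
  by_contra! h
  obtain ⟨⟨q, hqC, hq0, hβq, hq1⟩, ⟨p, hpC, hp0, hβp, hp2⟩⟩ := h
  have hq2 : q.2 < 0 := by
    by_contra! hq2
    exact hq0 (hKP ⟨hqC, hq1, hq2⟩)
  have hp1 : p.1 < 0 := by
    by_contra! hp1
    exact hp0 (hKP ⟨hpC, hp1, hp2⟩)
  have hq1pos : 0 < q.1 := by nlinarith [mul_pos hβ2 (neg_pos.2 hq2)]
  have hdet : q.1 * p.2 = q.2 * p.1 := by
    have : β.1 * (q.1 * p.2 - q.2 * p.1) = 0 := by linear_combination p.2 * hβq - q.2 * hβp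
    linarith [(mul_eq_zero.1 this).resolve_left hβ1.ne']
  have hneg : (q.1 / -p.1) • p = -q := by
    have hp : -p.1 ≠ 0 := by linarith
    ext <;> simp only [Prod.smul_fst, Prod.smul_snd, smul_eq_mul, Prod.fst_neg, Prod.snd_neg] <;>
      rw [div_mul_eq_mul_div, div_eq_iff hp] <;> linarith
  exact hq0 (hsalient q hqC (hneg ▸ hcone p hpC _ (div_pos hq1pos (neg_pos.2 hp1))))

theorem exists_isClausiusScale_ne_smul (hC : IsClosed C)
    (hcone : ∀ q ∈ C, ∀ α : ℝ, 0 < α → α • q ∈ C)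
    (hKP : C ∩ {x : ℝ × ℝ | 0 ≤ x.1 ∧ 0 ≤ x.2} ⊆ {0}) (hsalient : ∀ q ∈ C, -q ∈ C → q = 0)
    {β : ℝ × ℝ} (hβ : IsClausiusScale C β) : ∃ γ, IsClausiusScale C γ ∧ ∀ l : ℝ, γ ≠ l • β := by
  obtain ⟨hβ1, hβ2, hβC⟩ := hβ
  have hf : ∀ q ∈ C, pairing β q ≤ 0 := hβC
  rcases fst_neg_or_snd_neg_on_face hcone hKP hsalient hβ1 hβ2 with hface | hface
  · obtain ⟨ε, hε, hεC⟩ := exists_pos_forall_add_smul_nonpos hC hcone hf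
      (g := ContinuousLinearMap.fst ℝ ℝ ℝ) hface
    refine ⟨(β.1 + ε, β.2), ⟨by linarith, hβ2, fun q hq => ?_⟩, fun l hl => ?_⟩
    · have := hεC q hq
      simp only [pairing_apply, ContinuousLinearMap.coe_fst'] at this
      linarith
    · simp only [Prod.ext_iff, Prod.smul_fst, Prod.smul_snd, smul_eq_mul] at hl
      have : ε * β.2 = 0 := by linear_combination β.2 * hl.1 - β.1 * hl.2
      exact (mul_pos hε hβ2).ne' this
  · obtain ⟨ε, hε, hεC⟩ := exists_pos_forall_add_smul_nonpos hC hcone hf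
      (g := ContinuousLinearMap.snd ℝ ℝ ℝ) hface
    refine ⟨(β.1, β.2 + ε), ⟨hβ1, by linarith, fun q hq => ?_⟩, fun l hl => ?_⟩
    · have := hεC q hq
      simp only [pairing_apply, ContinuousLinearMap.coe_snd'] at this
      linarith
    · simp only [Prod.ext_iff, Prod.smul_fst, Prod.smul_snd, smul_eq_mul] at hl
      have : ε * β.1 = 0 := by linear_combination β.1 * hl.2 - β.2 * hl.1
      exact (mul_pos hε hβ1).ne' this

end TwoStates

/-- For a two-state substance, essential uniqueness of the Clausius temperature scale
forces the existence of a nonzero reversible element of the cone `Ĉ`. -/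
theorem uniqueness_forces_reversible (C : Set (ℝ × ℝ))
    (hclosed : IsClosed C) (hconv : Convex ℝ C)
    (hcone : ∀ q ∈ C, ∀ α : ℝ, 0 < α → α • q ∈ C)
    (hKP : C ∩ {x : ℝ × ℝ | 0 ≤ x.1 ∧ 0 ≤ x.2} = {0})
    (huniq : ∀ β γ : ℝ × ℝ,
      (0 < β.1 ∧ 0 < β.2 ∧ ∀ q ∈ C, β.1 * q.1 + β.2 * q.2 ≤ 0) →
      (0 < γ.1 ∧ 0 < γ.2 ∧ ∀ q ∈ C, γ.1 * q.1 + γ.2 * q.2 ≤ 0) →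
      ∃ l : ℝ, 0 < l ∧ γ = l • β) :
    ∃ q : ℝ × ℝ, q ≠ 0 ∧ q ∈ C ∧ -q ∈ C := by
  by_contra! hno
  have hsalient : ∀ q ∈ C, -q ∈ C → q = 0 := fun q hq hq' => by_contra fun h => hno q h hq hq'
  obtain ⟨β, hβ⟩ := exists_isClausiusScale hclosed hconv hcone hKP
  obtain ⟨γ, hγ, hγβ⟩ := exists_isClausiusScale_ne_smul hclosed hcone hKP.le hsalient hβ
  obtain ⟨l, -, hl⟩ := huniq β γ hβ hγ
  exact hγβ l hl
end

section
/- Let Ĉ ⊆ ℝ² be a closed convex cone with Ĉ ∩ ℝ²₊ = {0}, admitting an essentially unique Clausius temperature scale (β₁,β₂) with β₁,β₂ > 0. If Ĉ contains an element q with β₁q₁ + β₂q₂ < 0 (an irreversible element), then Ĉ = {q ∈ ℝ² : β₁q₁ + β₂q₂ ≤ 0}. -/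
/-- If a two-state Kelvin-Planck cone has an essentially unique Clausius temperature
scale `(β₁,β₂)` and contains an irreversible element, then it is the full half-plane
of vectors consistent with the Clausius inequality. -/
theorem unique_scale_with_irreversible_gives_halfplane (C : Set (ℝ × ℝ))
    (hclosed : IsClosed C) (hconv : Convex ℝ C)
    (hcone : ∀ q ∈ C, ∀ α : ℝ, 0 < α → α • q ∈ C)
    (hKP : C ∩ {x : ℝ × ℝ | 0 ≤ x.1 ∧ 0 ≤ x.2} = {0})
    (β : ℝ × ℝ) (hβ₁ : 0 < β.1) (hβ₂ : 0 < β.2)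
    (hβ : ∀ q ∈ C, β.1 * q.1 + β.2 * q.2 ≤ 0)
    (huniq : ∀ γ : ℝ × ℝ,
      (0 < γ.1 ∧ 0 < γ.2 ∧ ∀ q ∈ C, γ.1 * q.1 + γ.2 * q.2 ≤ 0) →
      ∃ l : ℝ, 0 < l ∧ γ = l • β)
    (hirrev : ∃ q ∈ C, β.1 * q.1 + β.2 * q.2 < 0) :
    C = {q : ℝ × ℝ | β.1 * q.1 + β.2 * q.2 ≤ 0} := by
  have h0C : (0 : ℝ × ℝ) ∈ C := by
    have : (0 : ℝ × ℝ) ∈ C ∩ {x : ℝ × ℝ | 0 ≤ x.1 ∧ 0 ≤ x.2} := by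
      rw [hKP]; rfl
    exact this.1
  apply Set.Subset.antisymm
  · intro q hq; exact hβ q hq
  · intro p hp
    by_contra hpC
    obtain ⟨f, u, hfu, hup⟩ := geometric_hahn_banach_closed_point hconv hclosed hpC
    have hu0 : 0 < u := by
      have := hfu 0 h0C
      simpa using this
    -- f is nonpositive on C
    have hfle : ∀ q ∈ C, f q ≤ 0 := by
      intro q hq
      by_contra h
      push_neg at h
      have hα : (0:ℝ) < (u + 1) / f q := by positivity
      have hmem := hcone q hq _ hα
      have := hfu _ hmem
      rw [map_smul] at this
      have h3 : (u + 1) / f q * f q < u := by simpa [smul_eq_mul] using this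
      have h4 : (u + 1) / f q * f q = u + 1 := div_mul_cancel₀ _ (ne_of_gt h)
      linarith
    -- decompose f
    set a := f (1, 0) with ha
    set b := f (0, 1) with hb
    have hdec : ∀ q : ℝ × ℝ, f q = a * q.1 + b * q.2 := by
      intro q
      have : q = q.1 • ((1:ℝ), (0:ℝ)) + q.2 • ((0:ℝ), (1:ℝ)) := by
        ext <;> simp
      rw [this, map_add, map_smul, map_smul]
      simp [ha, hb, mul_comm]
    set t : ℝ := |a| / β.1 + |b| / β.2 + 1 with ht
    clear_value a b t
    have htβ1 : -a < t * β.1 := by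
      have h1 : |a| ≤ |a| / β.1 * β.1 := by
        rw [div_mul_cancel₀ _ (ne_of_gt hβ₁)]
      have h2 : 0 ≤ |b| / β.2 * β.1 := by positivity
      have he : t * β.1 = |a| / β.1 * β.1 + |b| / β.2 * β.1 + β.1 := by rw [ht]; ring
      have := neg_abs_le a
      linarith
    have htβ2 : -b < t * β.2 := by
      have h1 : |b| ≤ |b| / β.2 * β.2 := by
        rw [div_mul_cancel₀ _ (ne_of_gt hβ₂)]
      have h2 : 0 ≤ |a| / β.1 * β.2 := by positivity
      have he : t * β.2 = |a| / β.1 * β.2 + |b| / β.2 * β.2 + β.2 := by rw [ht]; ring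
      have := neg_abs_le b
      linarith
    have ht0 : 0 < t := by rw [ht]; positivity
    set γ : ℝ × ℝ := (a + t * β.1, b + t * β.2) with hγ
    clear_value γ
    have hγprop : 0 < γ.1 ∧ 0 < γ.2 ∧ ∀ q ∈ C, γ.1 * q.1 + γ.2 * q.2 ≤ 0 := by
      refine ⟨by simp [hγ]; linarith, by simp [hγ]; linarith, ?_⟩
      intro q hq
      have h1 := hfle q hq
      have h2 := hβ q hq
      rw [hdec q] at h1
      have : γ.1 * q.1 + γ.2 * q.2 =
          (a * q.1 + b * q.2) + t * (β.1 * q.1 + β.2 * q.2) := by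
        simp [hγ]; ring
      rw [this]
      nlinarith
    obtain ⟨l, hl, hlβ⟩ := huniq γ hγprop
    have hγ1 : a + t * β.1 = l * β.1 := by
      have := congrArg Prod.fst hlβ; simpa [hγ] using this
    have hγ2 : b + t * β.2 = l * β.2 := by
      have := congrArg Prod.snd hlβ; simpa [hγ] using this
    -- f p = (l - t) * (β·p)
    have hfp : f p = (l - t) * (β.1 * p.1 + β.2 * p.2) := by
      rw [hdec p]
      have ha' : a = (l - t) * β.1 := by linarith
      have hb' : b = (l - t) * β.2 := by linarith
      rw [ha', hb']; ring
    have hfp0 : 0 < f p := lt_trans hu0 hup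
    have hpH : β.1 * p.1 + β.2 * p.2 ≤ 0 := hp
    rcases lt_or_eq_of_le hpH with hlt | heq
    · have hlt' : l - t < 0 := by nlinarith
      obtain ⟨q0, hq0C, hq0⟩ := hirrev
      have h1 := hfle q0 hq0C
      rw [hdec q0] at h1
      have ha' : a = (l - t) * β.1 := by linarith
      have hb' : b = (l - t) * β.2 := by linarith
      rw [ha', hb'] at h1
      nlinarith
    · rw [heq] at hfp
      simp at hfp
      linarith
end

section
/- Let Σ be a compact metric space and let P be a set of pairs (v,w) of finite signed Borel measures on Σ with v(Σ) = 0. Suppose there exist continuous functions η, T : Σ → ℝ with T strictly positive such that ∫η dv ≥ ∫(1/T) dw for all (v,w) ∈ P. Then the closure of the cone generated by P intersects {(0,ν) : ν a nonzero positive Borel measure on Σ} in the empty set. (I.e., the theory satisfies the Kelvin-Planck condition.) -/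
open MeasureTheory

/-- Integral of a real function against a finite signed Borel measure, via the
Jordan decomposition. -/
noncomputable def sintegral {Ω : Type*} [MeasurableSpace Ω]
    (μ : SignedMeasure Ω) (f : Ω → ℝ) : ℝ :=
  (∫ x, f x ∂μ.toJordanDecomposition.posPart) - ∫ x, f x ∂μ.toJordanDecomposition.negPart

/-- The weak-* topology on signed measures. -/
noncomputable instance signedMeasureWeakStar {Ω : Type*} [TopologicalSpace Ω]
    [MeasurableSpace Ω] : TopologicalSpace (SignedMeasure Ω) :=
  TopologicalSpace.induced (fun μ => fun g : C(Ω, ℝ) => sintegral μ g) Pi.topologicalSpace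

lemma sintegral_smul_nonneg {Ω : Type*} [MeasurableSpace Ω]
    (μ : SignedMeasure Ω) (f : Ω → ℝ) {α : ℝ} (hα : 0 ≤ α) :
    sintegral (α • μ) f = α * sintegral μ f := by
  unfold sintegral
  rw [SignedMeasure.toJordanDecomposition_smul_real,
    JordanDecomposition.real_smul_nonneg _ _ hα]
  simp only [JordanDecomposition.smul_posPart, JordanDecomposition.smul_negPart]
  rw [integral_smul_nnreal_measure, integral_smul_nnreal_measure]
  simp only [NNReal.smul_def, smul_eq_mul, Real.coe_toNNReal _ hα]
  ring

lemma sintegral_toSignedMeasure {Ω : Type*} [MeasurableSpace Ω]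
    (μ : Measure Ω) [h : IsFiniteMeasure μ] (f : Ω → ℝ) :
    sintegral μ.toSignedMeasure f = ∫ x, f x ∂μ := by
  have hj : (μ.toSignedMeasure).toJordanDecomposition
      = ⟨μ, 0, Measure.MutuallySingular.zero_right⟩ := by
    have := JordanDecomposition.toJordanDecomposition_toSignedMeasure
      (⟨μ, 0, Measure.MutuallySingular.zero_right⟩ : JordanDecomposition Ω)
    rwa [show (⟨μ, 0, Measure.MutuallySingular.zero_right⟩ :
        JordanDecomposition Ω).toSignedMeasure = μ.toSignedMeasure by
      simp [JordanDecomposition.toSignedMeasure]] at this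
  rw [sintegral, hj]
  simp

lemma continuous_sintegral_apply {Ω : Type*} [TopologicalSpace Ω] [MeasurableSpace Ω]
    (g : C(Ω, ℝ)) : Continuous (fun μ : SignedMeasure Ω => sintegral μ g) := by
  have h : Continuous (fun μ : SignedMeasure Ω => fun g : C(Ω, ℝ) => sintegral μ g) :=
    continuous_induced_dom
  exact (continuous_apply g).comp h

/-- If a theory admits a Clausius-Duhem pair `(η, T)`, then it satisfies the
Kelvin-Planck condition: the closure of the cone generated by the process set `P`
contains no element `(0, ν)` with `ν` a nonzero positive measure. -/
theorem clausius_duhem_pair_implies_kelvin_planck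
    {Ω : Type*} [MetricSpace Ω] [CompactSpace Ω] [MeasurableSpace Ω] [BorelSpace Ω]
    (P : Set (SignedMeasure Ω × SignedMeasure Ω))
    (hP0 : ∀ p ∈ P, p.1 Set.univ = 0)
    (η T : Ω → ℝ) (hη : Continuous η) (hT : Continuous T) (hTpos : ∀ σ, 0 < T σ)
    (hCD : ∀ p ∈ P, sintegral p.1 η ≥ sintegral p.2 (fun x => 1 / T x)) :
    closure {x : SignedMeasure Ω × SignedMeasure Ω | ∃ α : ℝ, 0 < α ∧ ∃ p ∈ P, x = α • p} ∩
      {x : SignedMeasure Ω × SignedMeasure Ω | x.1 = 0 ∧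
        ∃ (μ : Measure Ω) (h : IsFiniteMeasure μ), μ ≠ 0 ∧
          x.2 = @Measure.toSignedMeasure Ω _ μ h} = ∅ := by
  have hTinv : Continuous (fun x => 1 / T x) :=
    continuous_const.div hT (fun x => (hTpos x).ne')
  set gη : C(Ω, ℝ) := ⟨η, hη⟩
  set gT : C(Ω, ℝ) := ⟨fun x => 1 / T x, hTinv⟩
  -- the functional Φ
  set Φ : SignedMeasure Ω × SignedMeasure Ω → ℝ :=
    fun x => sintegral x.1 gη - sintegral x.2 gT with hΦ
  have hΦcont : Continuous Φ :=
    ((continuous_sintegral_apply gη).comp continuous_fst).sub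
      ((continuous_sintegral_apply gT).comp continuous_snd)
  have hclosed : IsClosed {x : SignedMeasure Ω × SignedMeasure Ω | 0 ≤ Φ x} :=
    isClosed_le continuous_const hΦcont
  have hsub : {x : SignedMeasure Ω × SignedMeasure Ω | ∃ α : ℝ, 0 < α ∧ ∃ p ∈ P, x = α • p}
      ⊆ {x | 0 ≤ Φ x} := by
    rintro x ⟨α, hα, p, hp, rfl⟩
    have h1 : sintegral (α • p).1 gη = α * sintegral p.1 η :=
      sintegral_smul_nonneg _ _ hα.le
    have h2 : sintegral (α • p).2 gT = α * sintegral p.2 (fun x => 1 / T x) :=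
      sintegral_smul_nonneg _ _ hα.le
    simp only [hΦ, Set.mem_setOf_eq, h1, h2, sub_nonneg]
    exact mul_le_mul_of_nonneg_left (hCD p hp) hα.le
  have hclsub := closure_minimal hsub hclosed
  ext x
  simp only [Set.mem_inter_iff, Set.mem_empty_iff_false, iff_false]
  rintro ⟨hxcl, hx1, μ, hfin, hμ0, hx2⟩
  have hΦx : 0 ≤ Φ x := hclsub hxcl
  have hΦval : Φ x = -∫ z, (1 : ℝ) / T z ∂μ := by
    simp only [hΦ]
    rw [hx1, hx2]
    have h0 : sintegral (0 : SignedMeasure Ω) gη = 0 := by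
      rw [sintegral, SignedMeasure.toJordanDecomposition_zero]; simp
    rw [h0, sintegral_toSignedMeasure]
    simp [gT]
  -- the integral of 1/T is positive
  have hInt : Integrable (fun z => 1 / T z) μ :=
    hTinv.integrable_of_hasCompactSupport
      ((isClosed_tsupport _).isCompact)
  have hpos : 0 < ∫ z, (1 : ℝ) / T z ∂μ := by
    rw [integral_pos_iff_support_of_nonneg (fun z => le_of_lt (by simpa using div_pos one_pos (hTpos z))) hInt]
    have hsupp : Function.support (fun z => (1 : ℝ) / T z) = Set.univ := by
      ext z; simp [Function.mem_support, one_div, (hTpos z).ne']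
    rw [hsupp]
    simpa [Measure.measure_univ_eq_zero, pos_iff_ne_zero] using hμ0
  rw [hΦval] at hΦx
  linarith
end

section
/- Let Σ be a compact metric space, T : Σ → ℝ continuous and strictly positive, and σ, σ' ∈ Σ. Suppose the closed convex cone P̂ contains the reversible Carnot element (0, c'δ_{σ'} - cδ_σ) together with its negative, where c, c' > 0 and c'/c = T(σ')/T(σ). Suppose also some other continuous positive function T' satisfies ∫(1/T') dw ≤ 0 for all (0,w) ∈ P̂. Then T'(σ')/T'(σ) = T(σ')/T(σ). -/
open MeasureTheory

theorem sintegral_neg' {Ω : Type*} [MeasurableSpace Ω]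
    (μ : SignedMeasure Ω) (f : Ω → ℝ) : sintegral (-μ) f = - sintegral μ f := by
  unfold sintegral
  rw [MeasureTheory.SignedMeasure.toJordanDecomposition_neg]
  simp [neg_sub]

/-- A Carnot element `(0, c'δ_{σ'} - cδ_σ)` (with its negative) in `P̂`, with
`c'/c = T(σ')/T(σ)`, forces every other Clausius-Duhem temperature scale `T'` to
have the same ratio at `σ'` and `σ`. -/
theorem carnot_element_forces_temperature_ratio
    {Ω : Type*} [MetricSpace Ω] [CompactSpace Ω] [MeasurableSpace Ω] [BorelSpace Ω]
    (Phat : Set (SignedMeasure Ω × SignedMeasure Ω)) (σ σ' : Ω)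
    (T : Ω → ℝ) (hT : Continuous T) (hTpos : ∀ x, 0 < T x)
    (c c' : ℝ) (hc : 0 < c) (hc' : 0 < c') (hratio : c' / c = T σ' / T σ)
    (hmem : ((0 : SignedMeasure Ω),
        c' • (Measure.dirac σ').toSignedMeasure - c • (Measure.dirac σ).toSignedMeasure) ∈ Phat)
    (hmem' : -((0 : SignedMeasure Ω),
        c' • (Measure.dirac σ').toSignedMeasure - c • (Measure.dirac σ).toSignedMeasure) ∈ Phat)
    (T' : Ω → ℝ) (hT' : Continuous T') (hT'pos : ∀ x, 0 < T' x)
    (hT'CD : ∀ w : SignedMeasure Ω, ((0 : SignedMeasure Ω), w) ∈ Phat →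
      sintegral w (fun x => 1 / T' x) ≤ 0) :
    T' σ' / T' σ = T σ' / T σ := by
  by_cases hσ : σ' = σ
  · subst hσ
    rw [div_self (hT'pos σ').ne', div_self (hTpos σ').ne']
  -- set up the Carnot signed measure and its Jordan decomposition
  set w : SignedMeasure Ω :=
    c' • (Measure.dirac σ').toSignedMeasure - c • (Measure.dirac σ).toSignedMeasure with hw
  have hsing : (c'.toNNReal • Measure.dirac σ') ⟂ₘ (c.toNNReal • Measure.dirac σ) := by
    refine ((Measure.MutuallySingular.smul _ ?_).symm.smul _).symm
    refine ⟨{σ}, measurableSet_singleton σ, ?_, ?_⟩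
    · simp [Measure.dirac_apply' _ (measurableSet_singleton σ), hσ]
    · simp [Measure.dirac_apply' _ (measurableSet_singleton σ).compl]
  set J : JordanDecomposition Ω :=
    ⟨c'.toNNReal • Measure.dirac σ', c.toNNReal • Measure.dirac σ, hsing⟩ with hJ
  have hwJ : w = J.toSignedMeasure := by
    ext i hi
    rw [JordanDecomposition.toSignedMeasure, hw]
    rw [VectorMeasure.sub_apply, VectorMeasure.sub_apply,
      VectorMeasure.smul_apply, VectorMeasure.smul_apply,
      Measure.toSignedMeasure_apply_measurable hi,
      Measure.toSignedMeasure_apply_measurable hi,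
      Measure.toSignedMeasure_apply_measurable hi,
      Measure.toSignedMeasure_apply_measurable hi]
    show c' • ((Measure.dirac σ') i).toReal - c • ((Measure.dirac σ) i).toReal =
      ((c'.toNNReal • Measure.dirac σ') i).toReal - ((c.toNNReal • Measure.dirac σ) i).toReal
    rw [Measure.smul_apply, Measure.smul_apply]
    have hd1 : ((Measure.dirac σ') i) ≠ ⊤ := measure_ne_top _ i
    have hd2 : ((Measure.dirac σ) i) ≠ ⊤ := measure_ne_top _ i
    rw [ENNReal.toReal_smul, ENNReal.toReal_smul]
    simp [NNReal.smul_def, Real.coe_toNNReal _ hc.le, Real.coe_toNNReal _ hc'.le]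
  have hJD : w.toJordanDecomposition = J := SignedMeasure.toJordanDecomposition_eq hwJ
  -- compute the Clausius integral
  have key : sintegral w (fun x => 1 / T' x) = c' * (1 / T' σ') - c * (1 / T' σ) := by
    unfold sintegral
    rw [hJD, hJ]
    show (∫ x, 1 / T' x ∂(c'.toNNReal • Measure.dirac σ')) -
      ∫ x, 1 / T' x ∂(c.toNNReal • Measure.dirac σ) = _
    rw [integral_smul_nnreal_measure, integral_smul_nnreal_measure,
      integral_dirac, integral_dirac]
    simp [NNReal.smul_def, Real.coe_toNNReal _ hc.le, Real.coe_toNNReal _ hc'.le]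
  have h1 := hT'CD w hmem
  have h2 := hT'CD (-w) (by simpa using hmem')
  rw [sintegral_neg'] at h2
  have hzero : c' * (1 / T' σ') - c * (1 / T' σ) = 0 := by
    rw [← key]; linarith
  have hT'σ := (hT'pos σ).ne'
  have hT'σ' := (hT'pos σ').ne'
  have hcc' : T' σ' / T' σ = c' / c := by
    field_simp at hzero ⊢
    linarith
  rw [hcc', hratio]
end

section
/- Let Σ be a compact metric space, T : Σ → ℝ continuous and strictly positive, and suppose the closed convex cone P̂ of a Kelvin-Planck theory contains every pair (0,q) with q a finite signed Borel measure satisfying ∫(1/T) dq = 0. Then any continuous strictly positive T' : Σ → ℝ such that ∫(1/T') dq ≤ 0 for all (0,q) ∈ P̂ is a positive scalar multiple of T. -/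
open MeasureTheory

/-! The signed measure `q = T(x) δ_x - T(y) δ_y` and its negative both annihilate `1 / T`, so
the Clausius-Duhem inequality for `T'` applies to both and forces `T(x) / T'(x) = T(y) / T'(y)`. -/

open scoped NNReal

section

variable {Ω : Type*} [MeasurableSpace Ω]

theorem sintegral_toSignedMeasure_sub {μ ν : Measure Ω} [IsFiniteMeasure μ] [IsFiniteMeasure ν]
    {f : Ω → ℝ} (hμ : Integrable f μ) (hν : Integrable f ν) :
    sintegral (μ.toSignedMeasure - ν.toSignedMeasure) f = ∫ x, f x ∂μ - ∫ x, f x ∂ν := by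
  have hsum : μ - ν + ν = ν - μ + μ := by
    rw [← Measure.toSignedMeasure_eq_toSignedMeasure_iff, Measure.toSignedMeasure_add,
      Measure.toSignedMeasure_add, add_comm (ν - μ).toSignedMeasure, ← sub_eq_sub_iff_add_eq_add]
    exact Measure.sub_toSignedMeasure_eq_toSignedMeasure_sub.symm
  have hint := congrArg (fun ρ : Measure Ω => ∫ x, f x ∂ρ) hsum
  rw [integral_add_measure (hμ.mono_measure Measure.sub_le) hν,
    integral_add_measure (hν.mono_measure Measure.sub_le) hμ] at hint
  rw [sintegral, Measure.toJordanDecomposition_toSignedMeasure_sub]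
  simp only [Measure.jordanDecompositionOfToSignedMeasureSub_posPart,
    Measure.jordanDecompositionOfToSignedMeasureSub_negPart]
  linarith

theorem integral_smul_dirac {f : Ω → ℝ} (hf : Measurable f) (c : ℝ≥0) (x : Ω) :
    ∫ y, f y ∂(c • Measure.dirac x) = c * f x := by
  rw [integral_smul_nnreal_measure, integral_dirac' f x hf.stronglyMeasurable]
  rfl

theorem integrable_smul_dirac {f : Ω → ℝ} (hf : Measurable f) (c : ℝ≥0) (x : Ω) :
    Integrable f (c • Measure.dirac x) :=
  (integrable_dirac' hf.stronglyMeasurable (by simp)).smul_measure_nnreal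

theorem sintegral_smul_dirac_sub_smul_dirac {f : Ω → ℝ} (hf : Measurable f) (a b : ℝ≥0)
    (x y : Ω) :
    sintegral ((a • Measure.dirac x).toSignedMeasure - (b • Measure.dirac y).toSignedMeasure) f =
      a * f x - b * f y := by
  rw [sintegral_toSignedMeasure_sub (integrable_smul_dirac hf a x) (integrable_smul_dirac hf b y),
    integral_smul_dirac hf, integral_smul_dirac hf]

theorem div_eq_div_of_sintegral_inv_nonpos {T T' : Ω → ℝ} (hT : Measurable T)
    (hT' : Measurable T') (hTpos : ∀ x, 0 < T x)
    (hCD : ∀ q : SignedMeasure Ω, sintegral q (fun x => 1 / T x) = 0 →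
      sintegral q (fun x => 1 / T' x) ≤ 0) :
    ∀ x y, T x / T' x = T y / T' y := by
  have hle : ∀ x y, T x / T' x ≤ T y / T' y := by
    intro x y
    have hq := hCD (((T x).toNNReal • Measure.dirac x).toSignedMeasure -
      ((T y).toNNReal • Measure.dirac y).toSignedMeasure)
    simp only [sintegral_smul_dirac_sub_smul_dirac (hT.const_div 1),
      sintegral_smul_dirac_sub_smul_dirac (hT'.const_div 1),
      Real.coe_toNNReal _ (hTpos x).le, Real.coe_toNNReal _ (hTpos y).le] at hq
    rw [mul_one_div_cancel (hTpos x).ne', mul_one_div_cancel (hTpos y).ne', sub_self] at hq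
    simpa only [mul_one_div, sub_nonpos] using hq rfl
  exact fun x y => (hle x y).antisymm (hle y x)

end

theorem exists_pos_mul_eq_of_div_eq {Ω : Type*} {T T' : Ω → ℝ} (hTpos : ∀ x, 0 < T x)
    (hT'pos : ∀ x, 0 < T' x) (h : ∀ x y, T x / T' x = T y / T' y) :
    ∃ l : ℝ, 0 < l ∧ ∀ x, T' x = l * T x := by
  rcases isEmpty_or_nonempty Ω with _ | ⟨⟨x₀⟩⟩
  · exact ⟨1, one_pos, isEmptyElim⟩
  refine ⟨T' x₀ / T x₀, div_pos (hT'pos x₀) (hTpos x₀), fun x => ?_⟩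
  have := h x x₀
  rw [div_eq_div_iff (hT'pos x).ne' (hT'pos x₀).ne'] at this
  field_simp [(hTpos x₀).ne']
  linarith

theorem full_reversible_cyclic_supply_forces_temperature_uniqueness_general
    {Ω : Type*} [MetricSpace Ω] [MeasurableSpace Ω] [BorelSpace Ω]
    (Phat : Set (SignedMeasure Ω × SignedMeasure Ω))
    (T : Ω → ℝ) (hT : Continuous T) (hTpos : ∀ x, 0 < T x)
    (hfull : ∀ q : SignedMeasure Ω, sintegral q (fun x => 1 / T x) = 0 →
      ((0 : SignedMeasure Ω), q) ∈ Phat)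
    (T' : Ω → ℝ) (hT' : Continuous T') (hT'pos : ∀ x, 0 < T' x)
    (hT'CD : ∀ q : SignedMeasure Ω, ((0 : SignedMeasure Ω), q) ∈ Phat →
      sintegral q (fun x => 1 / T' x) ≤ 0) :
    ∃ l : ℝ, 0 < l ∧ ∀ x, T' x = l * T x :=
  exists_pos_mul_eq_of_div_eq hTpos hT'pos <|
    div_eq_div_of_sintegral_inv_nonpos hT.measurable hT'.measurable hTpos
      fun q hq => hT'CD q (hfull q hq)

/-- If the closed convex cone `P̂` of a Kelvin-Planck theory contains every cyclic
element `(0, q)` with `∫(1/T) dq = 0`, then any Clausius-Duhem temperature scale `T'`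
for the theory is a positive scalar multiple of `T`. -/
theorem full_reversible_cyclic_supply_forces_temperature_uniqueness
    {Ω : Type*} [MetricSpace Ω] [CompactSpace Ω] [MeasurableSpace Ω] [BorelSpace Ω]
    (Phat : Set (SignedMeasure Ω × SignedMeasure Ω))
    (hclosed : IsClosed Phat) (hconv : Convex ℝ Phat)
    (hcone : ∀ p ∈ Phat, ∀ α : ℝ, 0 < α → α • p ∈ Phat)
    (hKP : Phat ∩ {x : SignedMeasure Ω × SignedMeasure Ω | x.1 = 0 ∧
        ∃ (μ : Measure Ω) (h : IsFiniteMeasure μ),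
          x.2 = @Measure.toSignedMeasure Ω _ μ h} = {(0, 0)})
    (T : Ω → ℝ) (hT : Continuous T) (hTpos : ∀ x, 0 < T x)
    (hfull : ∀ q : SignedMeasure Ω, sintegral q (fun x => 1 / T x) = 0 →
      ((0 : SignedMeasure Ω), q) ∈ Phat)
    (T' : Ω → ℝ) (hT' : Continuous T') (hT'pos : ∀ x, 0 < T' x)
    (hT'CD : ∀ q : SignedMeasure Ω, ((0 : SignedMeasure Ω), q) ∈ Phat →
      sintegral q (fun x => 1 / T' x) ≤ 0) :
    ∃ l : ℝ, 0 < l ∧ ∀ x, T' x = l * T x :=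
  full_reversible_cyclic_supply_forces_temperature_uniqueness_general Phat T hT hTpos hfull T' hT'
    hT'pos hT'CD
end
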